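/- arXiv:2112.03484 — 4 statements merged into one kernel-verified Lean document; each statement's English description precedes it below -/
import Mathlib

section
/- Let G be a follower-separated, synchronizing, deterministic presentation over a finite alphabet Σ. Then a word w is synchronizing for G if and only if w is intrinsically synchronizing for the sofic shift ⟨G⟩ presented by G. -/
/-- A labeled graph over vertex type `V` and alphabet `A`, given by its
labeled-edge relation: `Edge p a q` means there is an edge labeled `a`
from `p` to `q`. -/
structure LabeledGraph (V A : Type) where
  Edge : V → A → V → Prop

namespace LabeledGraph

variable {V A : Type}

/-- `G.Walk p w q` : there is a (finite) path from `p` to `q` labeled `w`. -/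
def Walk (G : LabeledGraph V A) : V → List A → V → Prop
  | p, [], q => p = q
  | p, a :: w, q => ∃ r, G.Edge p a r ∧ Walk G r w q

/-- The follower set of a vertex: labels of finite paths starting at `q`. -/
def follower (G : LabeledGraph V A) (q : V) : Set (List A) :=
  { w | ∃ q', G.Walk q w q' }

/-- The transition action on sets of vertices: `S·w`. -/
def transSet (G : LabeledGraph V A) (S : Set V) (w : List A) : Set V :=
  { q' | ∃ q ∈ S, G.Walk q w q' }

/-- `G` is deterministic (right-resolving). -/
def Deterministic (G : LabeledGraph V A) : Prop :=
  ∀ p a q q', G.Edge p a q → G.Edge p a q' → q = q'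

/-- `G` is essential: every vertex has an outgoing and an incoming edge. -/
def Essential (G : LabeledGraph V A) : Prop :=
  ∀ q, (∃ a r, G.Edge q a r) ∧ (∃ a p, G.Edge p a q)

/-- The sofic shift presented by `G`: labels of bi-infinite paths. -/
def shift (G : LabeledGraph V A) : Set (ℤ → A) :=
  { x | ∃ v : ℤ → V, ∀ j : ℤ, G.Edge (v j) (x j) (v (j + 1)) }

/-- `w` is a synchronizing word for `G`: `Q_G · w` is a singleton. -/
def SyncWord (G : LabeledGraph V A) (w : List A) : Prop :=
  ∃ r, G.transSet Set.univ w = {r}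

/-- A vertex `q` is synchronizing: some word synchronizes to `q`. -/
def SyncVertex (G : LabeledGraph V A) (q : V) : Prop :=
  ∃ w, G.transSet Set.univ w = {q}

/-- `G` is synchronizing: every vertex is synchronizing. -/
def Synchronizing (G : LabeledGraph V A) : Prop :=
  ∀ q, G.SyncVertex q

/-- `G` is follower-separated. -/
def FollowerSeparated (G : LabeledGraph V A) : Prop :=
  ∀ p q, G.follower p = G.follower q → p = q

/-- `G` is irreducible (strongly connected). -/
def StronglyConnected (G : LabeledGraph V A) : Prop :=
  ∀ p q, ∃ w, G.Walk p w q

/-- `q` is reachable from `p`. -/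
def Reachable (G : LabeledGraph V A) (p q : V) : Prop :=
  ∃ w, G.Walk p w q

/-- `C` is an irreducible component: an equivalence class of mutual reachability. -/
def IsIrredComponent (G : LabeledGraph V A) (C : Set V) : Prop :=
  ∃ p, C = { q | G.Reachable p q ∧ G.Reachable q p }

/-- `C` is terminal: everything reachable from `C` lies in `C`. -/
def TerminalSet (G : LabeledGraph V A) (C : Set V) : Prop :=
  ∀ p ∈ C, ∀ q, G.Reachable p q → q ∈ C

/-- `C` is initial: everything that reaches `C` lies in `C`. -/
def InitialSet (G : LabeledGraph V A) (C : Set V) : Prop :=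
  ∀ q ∈ C, ∀ p, G.Reachable p q → p ∈ C

/-- Subgraph induced by a set `P` of vertices. -/
def induce (G : LabeledGraph V A) (P : Set V) : LabeledGraph P A where
  Edge := fun p a q => G.Edge p.1 a q.1

/-- The graph `Ĝ`: vertices are ordered pairs of distinct vertices of `G`,
with an edge labeled `a` from `(p₁,p₂)` to `(q₁,q₂)` iff `G` has edges labeled
`a` from `p₁` to `q₁` and from `p₂` to `q₂`. -/
def pairGraph (G : LabeledGraph V A) : LabeledGraph { pq : V × V // pq.1 ≠ pq.2 } A where
  Edge := fun x a y => G.Edge x.1.1 a y.1.1 ∧ G.Edge x.1.2 a y.1.2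

end LabeledGraph

/-- The word `w` appears in the bi-infinite sequence `x`. -/
def AppearsIn {A : Type} (w : List A) (x : ℤ → A) : Prop :=
  ∃ i : ℤ, ∀ n : Fin w.length, x (i + (n : ℕ)) = w.get n

/-- The language of a subset of the full shift: all finite words appearing
in some point of `X`. -/
def lang {A : Type} (X : Set (ℤ → A)) : Set (List A) :=
  { w | ∃ x ∈ X, AppearsIn w x }

/-- `X` is a shift space. -/
def IsShiftSpace {A : Type} (X : Set (ℤ → A)) : Prop :=
  ∃ F : Set (List A), X = { x | ∀ w ∈ F, ¬ AppearsIn w x }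

/-- `X` is a shift of finite type. -/
def IsSFT {A : Type} (X : Set (ℤ → A)) : Prop :=
  ∃ F : Set (List A), F.Finite ∧ X = { x | ∀ w ∈ F, ¬ AppearsIn w x }

/-- `w` is intrinsically synchronizing for `X`. -/
def IntrinsicallySync {A : Type} (X : Set (ℤ → A)) (w : List A) : Prop :=
  w ∈ lang X ∧ ∀ u v, u ++ w ∈ lang X → w ++ v ∈ lang X → u ++ (w ++ v) ∈ lang X

/-- `X` is an irreducible shift space. -/
def IrreducibleShift {A : Type} (X : Set (ℤ → A)) : Prop :=
  ∀ u ∈ lang X, ∀ v ∈ lang X, ∃ w, u ++ (w ++ v) ∈ lang X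

/-- The follower set of a word `u` in `X`. -/
def followerX {A : Type} (X : Set (ℤ → A)) (u : List A) : Set (List A) :=
  { w | u ++ w ∈ lang X }

/-- `X` is `M`-step: every word of `B(X)` of length at least `M` is
intrinsically synchronizing for `X`. -/
def MStep {A : Type} (X : Set (ℤ → A)) (M : ℕ) : Prop :=
  ∀ w ∈ lang X, M ≤ w.length → IntrinsicallySync X w

namespace LGAux

open LabeledGraph

variable {V A : Type} {G : LabeledGraph V A}

lemma walk_append {p q r : V} {u v : List A} (h1 : G.Walk p u q) (h2 : G.Walk q v r) :
    G.Walk p (u ++ v) r := by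
  induction u generalizing p with
  | nil => exact (show p = q from h1) ▸ h2
  | cons a t ih =>
    obtain ⟨s, he, hw⟩ := h1
    exact ⟨s, he, ih hw⟩

lemma walk_split {u v : List A} : ∀ {p r : V}, G.Walk p (u ++ v) r →
    ∃ q, G.Walk p u q ∧ G.Walk q v r := by
  induction u with
  | nil => intro p r h; exact ⟨p, (rfl : p = p), h⟩
  | cons a t ih =>
    intro p r h
    obtain ⟨s, he, hw⟩ := h
    obtain ⟨q, h1, h2⟩ := ih hw
    exact ⟨q, ⟨s, he, h1⟩, h2⟩

lemma walk_det (hdet : G.Deterministic) :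
    ∀ {w : List A} {p q q' : V}, G.Walk p w q → G.Walk p w q' → q = q' := by
  intro w
  induction w with
  | nil => intro p q q' h1 h2; exact (show p = q from h1).symm.trans (show p = q' from h2)
  | cons a t ih =>
    intro p q q' h1 h2
    obtain ⟨r, he, hw⟩ := h1
    obtain ⟨r', he', hw'⟩ := h2
    cases hdet p a r r' he he'
    exact ih hw hw'

lemma exists_vertSeq : ∀ {w : List A} {p q : V}, G.Walk p w q →
    ∃ vs : ℕ → V, vs 0 = p ∧ vs w.length = q ∧
      ∀ n (hn : n < w.length), G.Edge (vs n) (w.get ⟨n, hn⟩) (vs (n + 1)) := by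
  intro w
  induction w with
  | nil =>
    intro p q h
    exact ⟨fun _ => p, rfl, show p = q from h, fun n hn => absurd hn (by simp)⟩
  | cons a t ih =>
    intro p q h
    obtain ⟨r, he, hw⟩ := h
    obtain ⟨vs, hvs0, hvsL, hvsE⟩ := ih hw
    refine ⟨fun n => match n with | 0 => p | n + 1 => vs n, rfl, hvsL, ?_⟩
    intro n hn
    match n with
    | 0 => simpa [hvs0] using he
    | m + 1 => exact hvsE m (Nat.lt_of_succ_lt_succ hn)

lemma walk_of_appears {x : ℤ → A} {v : ℤ → V}
    (hv : ∀ j, G.Edge (v j) (x j) (v (j + 1))) :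
    ∀ (w : List A) (i : ℤ), (∀ n : Fin w.length, x (i + (n : ℕ)) = w.get n) →
      G.Walk (v i) w (v (i + w.length)) := by
  intro w
  induction w with
  | nil =>
    intro i _
    have harg : i + (([] : List A).length : ℕ) = i := by simp
    rw [harg]
    exact (rfl : v i = v i)
  | cons a t ih =>
    intro i hi
    have hx0 : x i = a := by simpa using hi ⟨0, Nat.succ_pos _⟩
    have htail : ∀ n : Fin t.length, x (i + 1 + (n : ℕ)) = t.get n := by
      intro n
      have h := hi ⟨n.1 + 1, Nat.succ_lt_succ n.isLt⟩
      have harg : i + ((n.1 + 1 : ℕ) : ℤ) = i + 1 + (n.1 : ℕ) := by push_cast; ring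
      rw [harg] at h
      simpa using h
    have hw := ih (i + 1) htail
    refine ⟨v (i + 1), hx0 ▸ hv i, ?_⟩
    have harg : i + ((a :: t).length : ℕ) = i + 1 + (t.length : ℕ) := by
      simp only [List.length_cons]; push_cast; ring
    rw [harg]
    exact hw

lemma mem_lang_walk {w : List A} (h : w ∈ lang G.shift) : ∃ p q, G.Walk p w q := by
  obtain ⟨x, ⟨v, hv⟩, i, hi⟩ := h
  exact ⟨v i, v (i + w.length), walk_of_appears hv w i hi⟩

lemma walk_mem_lang (hess : G.Essential) {p q : V} {w : List A}
    (h : G.Walk p w q) : w ∈ lang G.shift := by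
  classical
  obtain ⟨fwdA, fwd, hfwd⟩ : ∃ fA : V → A, ∃ f : V → V, ∀ v : V, G.Edge v (fA v) (f v) := by
    choose fA f hf using fun v => (hess v).1
    exact ⟨fA, f, hf⟩
  obtain ⟨bwdA, bwd, hbwd⟩ : ∃ bA : V → A, ∃ b : V → V, ∀ v : V, G.Edge (b v) (bA v) v := by
    choose bA b hb using fun v => (hess v).2
    exact ⟨bA, b, hb⟩
  obtain ⟨vs, hvs0, hvsL, hvsE⟩ := exists_vertSeq h
  set L := w.length with hL
  set vpos : ℕ → V := fun n => if n ≤ L then vs n else fwd^[n - L] q with hvposdef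
  set vneg : ℕ → V := fun n => bwd^[n] p with hvnegdef
  have hvpos_le : ∀ n, n ≤ L → vpos n = vs n := by
    intro n hn; simp [hvposdef, hn]
  have hvpos_ge : ∀ n, L ≤ n → vpos n = fwd^[n - L] q := by
    intro n hn
    rcases eq_or_lt_of_le hn with he | hlt
    · rw [hvpos_le n he.ge, ← he, Nat.sub_self, Function.iterate_zero_apply, hvsL]
    · simp [hvposdef, Nat.not_le.mpr hlt]
  set v : ℤ → V := fun j => if 0 ≤ j then vpos j.toNat else vneg (-j).toNat with hvdef
  have hv_nat : ∀ n : ℕ, v (n : ℤ) = vpos n := by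
    intro n; simp [hvdef]
  have hv_neg : ∀ n : ℕ, v (-(n : ℤ)) = vneg n := by
    intro n
    cases n with
    | zero => simp [hvdef, hvnegdef, hvpos_le 0 (Nat.zero_le _), hvs0]
    | succ m =>
      have hneg : ¬ (0 : ℤ) ≤ -((m + 1 : ℕ) : ℤ) := by push_cast; omega
      have htn : (-(-((m + 1 : ℕ) : ℤ))).toNat = m + 1 := by push_cast; omega
      rw [hvdef]
      simp only [if_neg hneg, htn]
  set x : ℤ → A := fun j => if 0 ≤ j then
      (if h2 : j.toNat < L then w.get ⟨j.toNat, h2⟩ else fwdA (vpos j.toNat))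
    else bwdA (v (j + 1)) with hxdef
  have hedge : ∀ j : ℤ, G.Edge (v j) (x j) (v (j + 1)) := by
    intro j
    rcases le_or_gt 0 j with hj | hj
    · obtain ⟨n, rfl⟩ : ∃ n : ℕ, j = (n : ℤ) := ⟨j.toNat, (Int.toNat_of_nonneg hj).symm⟩
      have h1 : v (n : ℤ) = vpos n := hv_nat n
      have h2 : v ((n : ℤ) + 1) = vpos (n + 1) := by
        rw [show ((n : ℤ) + 1) = ((n + 1 : ℕ) : ℤ) by push_cast; ring]
        exact hv_nat _
      rcases lt_or_ge n L with hn | hn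
      · have hx : x (n : ℤ) = w.get ⟨n, hn⟩ := by
          rw [hxdef]
          simp only [if_pos (Int.natCast_nonneg n), Int.toNat_natCast, dif_pos hn]
        rw [h1, h2, hx, hvpos_le n hn.le, hvpos_le (n + 1) hn]
        exact hvsE n hn
      · have hx : x (n : ℤ) = fwdA (vpos n) := by
          rw [hxdef]
          simp only [if_pos (Int.natCast_nonneg n), Int.toNat_natCast,
            dif_neg (Nat.not_lt.mpr hn)]
        rw [h1, h2, hx, hvpos_ge n hn, hvpos_ge (n + 1) (le_trans hn (Nat.le_succ n)),
          show n + 1 - L = (n - L) + 1 by omega, Function.iterate_succ_apply']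
        exact hfwd _
    · obtain ⟨n, rfl⟩ : ∃ n : ℕ, j = -((n : ℤ) + 1) := ⟨(-(j + 1)).toNat, by omega⟩
      have h1 : v (-((n : ℤ) + 1)) = vneg (n + 1) := by
        rw [show -((n : ℤ) + 1) = -(((n + 1 : ℕ)) : ℤ) by push_cast; ring]
        exact hv_neg _
      have h2 : v (-((n : ℤ) + 1) + 1) = vneg n := by
        rw [show -((n : ℤ) + 1) + 1 = -((n : ℕ) : ℤ) by push_cast; ring]
        exact hv_neg _
      have hx : x (-((n : ℤ) + 1)) = bwdA (v (-((n : ℤ) + 1) + 1)) := by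
        rw [hxdef]
        exact if_neg (by push_cast; omega)
      rw [h1, hx, h2]
      have hstep : vneg (n + 1) = bwd (vneg n) := by
        simp [hvnegdef, Function.iterate_succ_apply']
      rw [hstep]
      exact hbwd _
  refine ⟨x, ⟨v, hedge⟩, 0, ?_⟩
  intro n
  have harg : (0 : ℤ) + ((n : ℕ) : ℤ) = ((n : ℕ) : ℤ) := by ring
  rw [harg, hxdef]
  have hn : (((n : ℕ) : ℤ)).toNat < L := by
    simp only [Int.toNat_natCast]
    exact n.isLt
  simp only [if_pos (Int.natCast_nonneg _), dif_pos hn]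
  exact congrArg w.get (Fin.ext (by simp))

end LGAux

/-- Let `G` be a follower-separated, synchronizing, deterministic presentation
over a finite alphabet `Σ`. Then a word `w` is synchronizing for `G` if and
only if `w` is intrinsically synchronizing for the sofic shift `⟨G⟩`. -/
theorem stmt0 {V A : Type} [Fintype V] [Fintype A] (G : LabeledGraph V A)
    (hdet : G.Deterministic) (hess : G.Essential)
    (hfs : G.FollowerSeparated) (hsync : G.Synchronizing) (w : List A) :
    G.SyncWord w ↔ IntrinsicallySync G.shift w := by
  constructor
  · rintro ⟨r, hr⟩
    have hrmem : r ∈ G.transSet Set.univ w := by rw [hr]; exact rfl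
    obtain ⟨q0, -, hq0⟩ := hrmem
    have hsingle : ∀ {p s : V}, G.Walk p w s → s = r := by
      intro p s hps
      have hmem : s ∈ G.transSet Set.univ w := ⟨p, trivial, hps⟩
      rwa [hr, Set.mem_singleton_iff] at hmem
    refine ⟨LGAux.walk_mem_lang hess hq0, ?_⟩
    intro u v hu hv
    obtain ⟨p1, q1, h1⟩ := LGAux.mem_lang_walk hu
    obtain ⟨m1, hu1, hw1⟩ := LGAux.walk_split h1
    obtain ⟨p3, q3, h3⟩ := LGAux.mem_lang_walk hv
    obtain ⟨m3, hw3, hv3⟩ := LGAux.walk_split h3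
    have e1 : q1 = r := hsingle hw1
    have e3 : m3 = r := hsingle hw3
    subst e1; subst e3
    exact LGAux.walk_mem_lang hess (LGAux.walk_append hu1 (LGAux.walk_append hw1 hv3))
  · rintro ⟨hwlang, hsync'⟩
    obtain ⟨p0, r0, h0⟩ := LGAux.mem_lang_walk hwlang
    have key : ∀ {q1 r1 q2 r2 : V}, G.Walk q1 w r1 → G.Walk q2 w r2 →
        G.follower r1 ⊆ G.follower r2 := by
      intro q1 r1 q2 r2 h1 h2 vv hvv
      obtain ⟨s1, hs1⟩ := hvv
      obtain ⟨u, hu⟩ := hsync q2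
      have hq2 : q2 ∈ G.transSet Set.univ u := by rw [hu]; exact rfl
      obtain ⟨pu, -, hpu⟩ := hq2
      have huw : u ++ w ∈ lang G.shift :=
        LGAux.walk_mem_lang hess (LGAux.walk_append hpu h2)
      have hwv : w ++ vv ∈ lang G.shift :=
        LGAux.walk_mem_lang hess (LGAux.walk_append h1 hs1)
      obtain ⟨P, Q, hPQ⟩ := LGAux.mem_lang_walk (hsync' u vv huw hwv)
      obtain ⟨m, hPu, hrest⟩ := LGAux.walk_split hPQ
      obtain ⟨m2, hmw, hmv⟩ := LGAux.walk_split hrest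
      have hm : m = q2 := by
        have hmem : m ∈ G.transSet Set.univ u := ⟨P, trivial, hPu⟩
        rwa [hu, Set.mem_singleton_iff] at hmem
      subst hm
      have hm2 : m2 = r2 := LGAux.walk_det hdet hmw h2
      subst hm2
      exact ⟨Q, hmv⟩
    have keyeq : ∀ {q1 r1 : V}, G.Walk q1 w r1 → r1 = r0 := by
      intro q1 r1 h1
      exact hfs r1 r0 (Set.Subset.antisymm (key h1 h0) (key h0 h1))
    refine ⟨r0, ?_⟩
    ext s
    simp only [Set.mem_singleton_iff]
    constructor
    · rintro ⟨q, -, hq⟩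
      exact keyeq hq
    · rintro rfl
      exact ⟨p0, trivial, h0⟩
end

section
/- A sofic shift X ⊆ Σ^ℤ has a synchronizing deterministic presentation if and only if for every word u ∈ B(X) there exists an intrinsically synchronizing word w for X such that u ∈ F_X(w). -/
/-!
If a word `w` synchronizes an essential presentation to a vertex `p`, every walk labeled `w`
ends at `p`; hence `w` is intrinsically synchronizing, and every word read from `p` follows `w`.

Conversely, the follower sets `F_X(w)` of intrinsically synchronizing words `w` are the vertices
of a deterministic presentation with edges `F_X(w) —a→ F_X(wa) = a⁻¹F_X(w)`. In an essential
presentation of `X`, `F_X(w)` only depends on the set of vertices reached by `w`, so there are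
finitely many such vertices. The word `w` synchronizes to `F_X(w)`, because `F_X(sw) = F_X(w)`
whenever `w` is intrinsically synchronizing. The hypothesis makes every word of `B(X)` a walk
label, so the new presentation has language `B(X)`, and by compactness two presentations on
finitely many vertices with the same language present the same shift.
-/

open Set

section Language

variable {A : Type} {X : Set (ℤ → A)}

def ReadsAt (x : ℤ → A) (i : ℤ) (w : List A) : Prop :=
  ∀ k (hk : k < w.length), x (i + k) = w[k]

theorem appearsIn_iff {w : List A} {x : ℤ → A} : AppearsIn w x ↔ ∃ i, ReadsAt x i w :=
  ⟨fun ⟨i, h⟩ => ⟨i, fun k hk => h ⟨k, hk⟩⟩, fun ⟨i, h⟩ => ⟨i, fun n => h n n.2⟩⟩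

theorem readsAt_cons {x : ℤ → A} {i : ℤ} {a : A} {w : List A} :
    ReadsAt x i (a :: w) ↔ x i = a ∧ ReadsAt x (i + 1) w := by
  refine ⟨fun h => ⟨?_, fun k hk => ?_⟩, fun ⟨h0, h⟩ k hk => ?_⟩
  · have := h 0 (by simp)
    rw [List.getElem_cons_zero] at this
    simpa using this
  · have := h (k + 1) (by simpa using hk)
    rw [List.getElem_cons_succ] at this
    simpa [add_assoc, add_comm (1 : ℤ)] using this
  · cases k with
    | zero => simpa using h0
    | succ k => simpa [add_assoc, add_comm (1 : ℤ)] using h k (by simpa using hk)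

theorem AppearsIn.of_isInfix {u w : List A} {x : ℤ → A} (huw : u <:+: w)
    (h : AppearsIn w x) : AppearsIn u x := by
  obtain ⟨s, t, rfl⟩ := huw
  obtain ⟨i, h⟩ := appearsIn_iff.1 h
  refine appearsIn_iff.2 ⟨i + s.length, fun k hk => ?_⟩
  have := h (s.length + k) (by simp; omega)
  rw [List.getElem_append_left (by simp; omega), List.getElem_append_right (by omega)] at this
  simpa [add_assoc] using this

theorem mem_lang_of_isInfix {u w : List A} (huw : u <:+: w) (hw : w ∈ lang X) : u ∈ lang X :=
  let ⟨x, hx, h⟩ := hw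
  ⟨x, hx, h.of_isInfix huw⟩

theorem exists_append_singleton_mem_lang {w : List A} (hw : w ∈ lang X) :
    ∃ a, w ++ [a] ∈ lang X := by
  obtain ⟨x, hx, h⟩ := hw
  obtain ⟨i, h⟩ := appearsIn_iff.1 h
  refine ⟨x (i + w.length), x, hx, appearsIn_iff.2 ⟨i, fun k hk => ?_⟩⟩
  rcases lt_or_eq_of_le (Nat.le_of_lt_succ (by simpa using hk)) with hk | rfl
  · rw [List.getElem_append_left hk, h k hk]
  · simp

theorem setOf_append_mem_followerX (w u : List A) :
    {v | u ++ v ∈ followerX X w} = followerX X (w ++ u) := by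
  simp [followerX]

theorem IntrinsicallySync.append_right {w v : List A} (hw : IntrinsicallySync X w)
    (hwv : w ++ v ∈ lang X) : IntrinsicallySync X (w ++ v) := by
  refine ⟨hwv, fun u t hu ht => ?_⟩
  rw [← List.append_assoc] at hu
  simpa using hw.2 u (v ++ t) (mem_lang_of_isInfix (List.prefix_append _ _).isInfix hu)
    (by simpa using ht)

theorem IntrinsicallySync.followerX_append_left {s w : List A} (hw : IntrinsicallySync X w)
    (hsw : s ++ w ∈ lang X) : followerX X (s ++ w) = followerX X w := by
  ext v
  simp only [followerX, List.append_assoc]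
  exact ⟨mem_lang_of_isInfix (List.suffix_append _ _).isInfix, hw.2 s v hsw⟩

end Language

namespace LabeledGraph

variable {A V W : Type} (G : LabeledGraph V A)

@[simp] theorem walk_nil {p q : V} : G.Walk p [] q ↔ p = q := Iff.rfl

@[simp] theorem walk_cons {p q : V} {a : A} {w : List A} :
    G.Walk p (a :: w) q ↔ ∃ r, G.Edge p a r ∧ G.Walk r w q := Iff.rfl

theorem walk_append_iff {p r : V} {u v : List A} :
    G.Walk p (u ++ v) r ↔ ∃ q, G.Walk p u q ∧ G.Walk q v r := by
  induction u generalizing p with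
  | nil => simp
  | cons a u ih => simp only [List.cons_append, walk_cons, ih]; grind

def PathOn (x : ℤ → A) (v : ℤ → V) (I : Set ℤ) : Prop :=
  ∀ j ∈ I, G.Edge (v j) (x j) (v (j + 1))

variable {G}

theorem mem_shift_iff {x : ℤ → A} : x ∈ G.shift ↔ ∃ v, G.PathOn x v univ := by
  simp [shift, PathOn]

theorem PathOn.mono {x : ℤ → A} {v : ℤ → V} {I J : Set ℤ} (h : G.PathOn x v J) (hIJ : I ⊆ J) :
    G.PathOn x v I :=
  fun j hj => h j (hIJ hj)

theorem PathOn.glue {x y : ℤ → A} {v u : ℤ → V} {I : Set ℤ} {T : ℤ}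
    (hv : G.PathOn x v (I ∩ Iio T)) (hu : G.PathOn y u (I ∩ Ici T)) (hT : v T = u T) :
    G.PathOn (fun j => if j < T then x j else y j) (fun j => if j < T then v j else u j) I := by
  intro j hj
  by_cases hjT : j < T
  · have := hv j ⟨hj, hjT⟩
    by_cases hj1 : j + 1 < T
    · simpa [hjT, hj1] using this
    · obtain rfl : T = j + 1 := by omega
      simpa [hjT, ← hT] using this
  · simpa [hjT, show ¬ j + 1 < T by omega] using hu j ⟨hj, not_lt.1 hjT⟩

theorem PathOn.walk {x : ℤ → A} {v : ℤ → V} {i : ℤ} {w : List A}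
    (h : G.PathOn x v (Ico i (i + w.length))) (hw : ReadsAt x i w) :
    G.Walk (v i) w (v (i + w.length)) := by
  induction w generalizing i with
  | nil => simp
  | cons a w ih =>
    obtain ⟨rfl, hw'⟩ := readsAt_cons.1 hw
    refine ⟨v (i + 1), h i (by simp), ?_⟩
    have := ih (i := i + 1) (h.mono fun j hj => by simp at hj ⊢; omega) hw'
    simpa [add_assoc, add_comm (1 : ℤ)] using this

theorem Walk.exists_pathOn {p q : V} {w : List A} (h : G.Walk p w q) {x : ℤ → A} {i : ℤ}
    (hw : ReadsAt x i w) :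
    ∃ v, v i = p ∧ v (i + w.length) = q ∧ G.PathOn x v (Ico i (i + w.length)) := by
  induction w generalizing p i with
  | nil => exact ⟨fun _ => p, rfl, by simpa using h, by simp [PathOn]⟩
  | cons a w ih =>
    obtain ⟨r, hpr, hrq⟩ := h
    obtain ⟨rfl, hw'⟩ := readsAt_cons.1 hw
    obtain ⟨v, hvr, hvq, hv⟩ := ih hrq hw'
    refine ⟨Function.update v i p, by simp, ?_, fun j hj => ?_⟩
    · rw [Function.update_of_ne (by simp; omega)]
      simpa [add_assoc, add_comm (1 : ℤ)] using hvq
    · rcases eq_or_ne j i with rfl | hji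
      · simpa [hvr] using hpr
      · simp only [mem_Ico, List.length_cons, Nat.cast_add, Nat.cast_one] at hj
        rw [Function.update_of_ne hji, Function.update_of_ne (by omega)]
        exact hv j (by simp; omega)

theorem exists_walk_of_mem_lang {w : List A} (hw : w ∈ lang G.shift) : ∃ p q, G.Walk p w q := by
  obtain ⟨x, hx, hxw⟩ := hw
  obtain ⟨v, hv⟩ := mem_shift_iff.1 hx
  obtain ⟨i, hi⟩ := appearsIn_iff.1 hxw
  exact ⟨_, _, (hv.mono (subset_univ _)).walk hi⟩

theorem Essential.exists_pathOn_Ici (hG : G.Essential) (q : V) (T : ℤ) :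
    ∃ x v, v T = q ∧ G.PathOn x v (Ici T) := by
  choose a next hnext using fun r => (hG r).1
  refine ⟨fun j => a (next^[(j - T).toNat] q), fun j => next^[(j - T).toNat] q, by simp,
    fun j hj => ?_⟩
  dsimp only
  rw [show (j + 1 - T).toNat = (j - T).toNat + 1 by simp at hj; omega,
    Function.iterate_succ_apply']
  exact hnext _

theorem Essential.exists_pathOn_Iio (hG : G.Essential) (p : V) (T : ℤ) :
    ∃ x v, v T = p ∧ G.PathOn x v (Iio T) := by
  choose a prev hprev using fun r => (hG r).2
  refine ⟨fun j => a (prev^[(T - (j + 1)).toNat] p), fun j => prev^[(T - j).toNat] p, by simp,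
    fun j hj => ?_⟩
  dsimp only
  rw [show (T - j).toNat = (T - (j + 1)).toNat + 1 by simp at hj; omega,
    Function.iterate_succ_apply']
  exact hprev _

/-- In an essential graph every walk extends in both directions to a bi-infinite path. -/
theorem Essential.mem_lang_shift (hG : G.Essential) {p q : V} {w : List A} (h : G.Walk p w q) :
    w ∈ lang G.shift := by
  obtain ⟨a, -⟩ := (hG p).1
  obtain ⟨xl, vl, hvl, hl⟩ := hG.exists_pathOn_Iio p 0
  obtain ⟨xr, vr, hvr, hr⟩ := hG.exists_pathOn_Ici q w.length
  let x : ℤ → A := fun j => w.getD j.toNat a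
  have hx : ReadsAt x 0 w := fun k hk => by simp [x, hk]
  obtain ⟨vw, hvw0, hvwq, hw⟩ := h.exists_pathOn hx
  have hlw := PathOn.glue (I := Iio w.length) (hl.mono inter_subset_right)
    (hw.mono fun j hj => by simp at hj ⊢; omega) (hvl.trans hvw0.symm)
  have hlwr := PathOn.glue (I := univ) (hlw.mono inter_subset_right) (hr.mono inter_subset_right)
    (by simpa [hvr, (Int.natCast_nonneg _).not_gt] using hvwq)
  refine ⟨_, mem_shift_iff.2 ⟨_, hlwr⟩, appearsIn_iff.2 ⟨0, fun k hk => ?_⟩⟩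
  simpa [hk, (Int.natCast_nonneg _).not_gt] using hx k hk

theorem Essential.mem_lang_shift_iff (hG : G.Essential) {w : List A} :
    w ∈ lang G.shift ↔ ∃ p q, G.Walk p w q :=
  ⟨exists_walk_of_mem_lang, fun ⟨_, _, h⟩ => hG.mem_lang_shift h⟩

theorem mem_shift_of_forall_appearsIn [Finite V] {x : ℤ → A}
    (h : ∀ w, AppearsIn w x → w ∈ lang G.shift) : x ∈ G.shift := by
  -- compactness of `ℤ → V` for the discrete topology on the finite set `V`
  let _ : TopologicalSpace V := ⊥
  have : DiscreteTopology V := ⟨rfl⟩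
  let C : ℕ → Set (ℤ → V) := fun m => {v | G.PathOn x v (Ico (-m : ℤ) m)}
  have hC : ∀ m, C m = ⋂ j ∈ Ico (-m : ℤ) m, (fun v : ℤ → V => (v j, v (j + 1))) ⁻¹'
      {e | G.Edge e.1 (x j) e.2} := fun m => by ext; simp [C, PathOn]
  have hclosed : ∀ m, IsClosed (C m) := fun m => by
    rw [hC]
    exact isClosed_biInter fun j _ => (isClosed_discrete _).preimage (by fun_prop)
  have hne : ∀ m, (C m).Nonempty := fun m => by
    let w := List.ofFn fun k : Fin (2 * m) => x (-m + k)
    have hw : ReadsAt x (-m) w := fun k hk => by simp [w]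
    obtain ⟨p, q, hpq⟩ := exists_walk_of_mem_lang (h w (appearsIn_iff.2 ⟨_, hw⟩))
    obtain ⟨v, -, -, hv⟩ := hpq.exists_pathOn hw
    exact ⟨v, hv.mono fun j hj => by simp [w] at hj ⊢; omega⟩
  obtain ⟨v, hv⟩ := IsCompact.nonempty_iInter_of_sequence_nonempty_isCompact_isClosed C
    (fun m => fun v hv => hv.mono (Ico_subset_Ico (by simp) (by simp))) hne
    (hclosed 0).isCompact hclosed
  refine mem_shift_iff.2 ⟨v, fun j _ => mem_iInter.1 hv (j.natAbs + 1) j ?_⟩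
  simp only [mem_Ico]; omega

theorem shift_eq_of_lang_eq [Finite V] [Finite W] {H : LabeledGraph W A}
    (h : lang G.shift = lang H.shift) : G.shift = H.shift := by
  ext x
  exact ⟨fun hx => mem_shift_of_forall_appearsIn fun w hw => h ▸ ⟨x, hx, hw⟩,
    fun hx => mem_shift_of_forall_appearsIn fun w hw => h ▸ ⟨x, hx, hw⟩⟩

def essentialVertices (G : LabeledGraph V A) : Set V :=
  {q | ∃ x v, G.PathOn x v univ ∧ q ∈ range v}

theorem essential_induce_essentialVertices (G : LabeledGraph V A) :
    (G.induce G.essentialVertices).Essential := by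
  rintro ⟨q, x, v, hv, j, rfl⟩
  have hmem : ∀ i, v i ∈ G.essentialVertices := fun i => ⟨x, v, hv, i, rfl⟩
  exact ⟨⟨x j, ⟨v (j + 1), hmem _⟩, hv j trivial⟩,
    ⟨x (j - 1), ⟨v (j - 1), hmem _⟩, by simpa [induce] using hv (j - 1) trivial⟩⟩

theorem shift_induce_essentialVertices (G : LabeledGraph V A) :
    (G.induce G.essentialVertices).shift = G.shift := by
  ext x
  refine ⟨fun ⟨v, hv⟩ => ⟨fun j => v j, hv⟩, fun hx => ?_⟩
  obtain ⟨v, hv⟩ := mem_shift_iff.1 hx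
  exact ⟨fun j => ⟨v j, x, v, hv, j, rfl⟩, fun j => hv j trivial⟩

theorem Essential.intrinsicallySync (hG : G.Essential) {w : List A} {p : V}
    (hw : G.transSet univ w = {p}) : IntrinsicallySync G.shift w := by
  have hend : ∀ {r s}, G.Walk r w s → s = p := fun h => by
    have hs : _ ∈ G.transSet univ w := ⟨_, trivial, h⟩
    rwa [hw] at hs
  obtain ⟨r, -, hrp⟩ : p ∈ G.transSet univ w := hw ▸ rfl
  refine ⟨hG.mem_lang_shift hrp, fun u v huw hwv => ?_⟩
  obtain ⟨_, _, huw⟩ := hG.mem_lang_shift_iff.1 huw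
  obtain ⟨s, hu, hw₁⟩ := G.walk_append_iff.1 huw
  obtain ⟨_, _, hwv⟩ := hG.mem_lang_shift_iff.1 hwv
  obtain ⟨t, hw₂, hv⟩ := G.walk_append_iff.1 hwv
  rw [hend hw₂, ← hend hw₁] at hv
  exact hG.mem_lang_shift (G.walk_append_iff.2 ⟨s, hu, G.walk_append_iff.2 ⟨_, hw₁, hv⟩⟩)

theorem Essential.exists_intrinsicallySync (hG : G.Essential) (hsync : G.Synchronizing)
    {u : List A} (hu : u ∈ lang G.shift) :
    ∃ w, IntrinsicallySync G.shift w ∧ u ∈ followerX G.shift w := by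
  obtain ⟨p, q, hpq⟩ := hG.mem_lang_shift_iff.1 hu
  obtain ⟨w, hw⟩ := hsync p
  obtain ⟨r, -, hrp⟩ : p ∈ G.transSet univ w := hw ▸ rfl
  exact ⟨w, hG.intrinsicallySync hw, hG.mem_lang_shift (G.walk_append_iff.2 ⟨p, hrp, hpq⟩)⟩

theorem Essential.followerX_eq (hG : G.Essential) (w : List A) :
    followerX G.shift w = ⋃ q ∈ G.transSet univ w, G.follower q := by
  ext v
  simp only [followerX, hG.mem_lang_shift_iff, walk_append_iff, mem_ofPred_eq, mem_iUnion,
    transSet, follower]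
  grind

theorem Essential.finite_range_followerX [Finite V] (hG : G.Essential) :
    (range (followerX G.shift)).Finite :=
  (finite_range fun S : Set V => ⋃ q ∈ S, G.follower q).subset
    (range_subset_iff.2 fun w => ⟨_, (hG.followerX_eq w).symm⟩)

theorem finite_range_followerX [Finite V] (G : LabeledGraph V A) :
    (range (followerX G.shift)).Finite :=
  G.shift_induce_essentialVertices ▸ G.essential_induce_essentialVertices.finite_range_followerX

def comap (G : LabeledGraph V A) (e : W ≃ V) : LabeledGraph W A where
  Edge p a q := G.Edge (e p) a (e q)

theorem walk_comap_iff (e : W ≃ V) {p q : W} {w : List A} :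
    (G.comap e).Walk p w q ↔ G.Walk (e p) w (e q) := by
  induction w generalizing p with
  | nil => simp
  | cons a w ih =>
    simp only [walk_cons, ih]
    exact ⟨fun ⟨r, h⟩ => ⟨e r, h⟩, fun ⟨r, h⟩ => ⟨e.symm r, by simpa [comap] using h⟩⟩

theorem transSet_univ_comap (e : W ≃ V) (w : List A) :
    (G.comap e).transSet univ w = e ⁻¹' G.transSet univ w := by
  ext q
  simp only [transSet, walk_comap_iff, mem_univ, true_and, mem_preimage, mem_ofPred_eq]
  exact ⟨fun ⟨p, h⟩ => ⟨e p, h⟩, fun ⟨p, h⟩ => ⟨e.symm p, by simpa using h⟩⟩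

theorem Deterministic.comap (hG : G.Deterministic) (e : W ≃ V) : (G.comap e).Deterministic :=
  fun _ _ _ _ h h' => e.injective (hG _ _ _ _ h h')

theorem Essential.comap (hG : G.Essential) (e : W ≃ V) : (G.comap e).Essential := fun q =>
  let ⟨⟨a, r, hr⟩, ⟨b, p, hp⟩⟩ := hG (e q)
  ⟨⟨a, e.symm r, by simpa [LabeledGraph.comap] using hr⟩,
    ⟨b, e.symm p, by simpa [LabeledGraph.comap] using hp⟩⟩

theorem Synchronizing.comap (hG : G.Synchronizing) (e : W ≃ V) :
    (G.comap e).Synchronizing := fun q =>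
  let ⟨w, hw⟩ := hG (e q)
  ⟨w, by rw [transSet_univ_comap, hw, ← image_singleton, e.preimage_image]⟩

theorem shift_comap (e : W ≃ V) : (G.comap e).shift = G.shift := by
  ext x
  exact ⟨fun ⟨v, hv⟩ => ⟨e ∘ v, hv⟩, fun ⟨v, hv⟩ => ⟨e.symm ∘ v, by simpa [comap] using hv⟩⟩

end LabeledGraph

section SyncPresentation

open LabeledGraph

variable {A : Type} {X : Set (ℤ → A)}

def syncFollowers (X : Set (ℤ → A)) : Set (Set (List A)) :=
  {S | ∃ w, IntrinsicallySync X w ∧ S = followerX X w}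

def syncPresentation (X : Set (ℤ → A)) : LabeledGraph (syncFollowers X) A where
  Edge S a T := T.1 = {v | a :: v ∈ S.1}

theorem setOf_append_mem_mem_syncFollowers_iff {S : Set (List A)} (hS : S ∈ syncFollowers X)
    {u : List A} : {v | u ++ v ∈ S} ∈ syncFollowers X ↔ u ∈ S := by
  obtain ⟨w, hw, rfl⟩ := hS
  refine ⟨fun ⟨t, ht, h⟩ => ?_,
    fun hu => ⟨w ++ u, hw.append_right hu, setOf_append_mem_followerX w u⟩⟩
  simpa using (Set.ext_iff.1 h []).2 (by simpa [followerX] using ht.1)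

theorem nil_mem_of_mem_syncFollowers {S : Set (List A)} (hS : S ∈ syncFollowers X) : [] ∈ S := by
  simpa using (setOf_append_mem_mem_syncFollowers_iff hS (u := [])).1 (by simpa using hS)

theorem mem_of_append_mem_syncFollowers {S : Set (List A)} (hS : S ∈ syncFollowers X)
    {u v : List A} (h : u ++ v ∈ S) : u ∈ S := by
  obtain ⟨w, -, rfl⟩ := hS
  exact mem_lang_of_isInfix (by simpa using List.prefix_append (w ++ u) v |>.isInfix) h

theorem walk_syncPresentation_iff {S T : syncFollowers X} {u : List A} :
    (syncPresentation X).Walk S u T ↔ T.1 = {v | u ++ v ∈ S.1} := by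
  induction u generalizing S with
  | nil => simp [Subtype.ext_iff, eq_comm]
  | cons a u ih =>
    simp only [walk_cons, ih]
    refine ⟨fun ⟨R, hR, hT⟩ => by rw [hT, hR]; rfl, fun hT => ?_⟩
    have hau : a :: u ∈ S.1 := by simpa [hT] using nil_mem_of_mem_syncFollowers T.2
    refine ⟨⟨_, (setOf_append_mem_mem_syncFollowers_iff (u := [a]) S.2).2
      (mem_of_append_mem_syncFollowers S.2 (v := u) hau)⟩, rfl, ?_⟩
    rw [hT]; rfl

theorem deterministic_syncPresentation : (syncPresentation X).Deterministic :=
  fun _ _ _ _ h h' => Subtype.ext (h.trans h'.symm)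

theorem essential_syncPresentation
    (hX : ∀ u ∈ lang X, ∃ w, IntrinsicallySync X w ∧ u ∈ followerX X w) :
    (syncPresentation X).Essential := by
  rintro ⟨S, hS⟩
  obtain ⟨w, hw, rfl⟩ := id hS
  refine ⟨?_, ?_⟩
  · obtain ⟨a, ha⟩ := exists_append_singleton_mem_lang hw.1
    exact ⟨a, ⟨_, (setOf_append_mem_mem_syncFollowers_iff hS (u := [a])).2 ha⟩, rfl⟩
  rcases List.eq_nil_or_concat' w with rfl | ⟨w, b, rfl⟩
  · -- a loop, since `F_X(a) = F_X([])` when the empty word is intrinsically synchronizing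
    obtain ⟨a, ha⟩ := exists_append_singleton_mem_lang hw.1
    refine ⟨a, ⟨_, hS⟩, ?_⟩
    show followerX X [] = {v | [a] ++ v ∈ followerX X []}
    rw [setOf_append_mem_followerX, ← hw.followerX_append_left (s := [a]) (by simpa using ha)]
    rfl
  · obtain ⟨s, hs, hsw⟩ := hX _ hw.1
    have hswb : s ++ w ++ [b] ∈ lang X := by simpa [followerX] using hsw
    refine ⟨b, ⟨_, s ++ w, hs.append_right (mem_lang_of_isInfix
      (List.prefix_append _ _).isInfix hswb), rfl⟩, ?_⟩
    show followerX X (w ++ [b]) = {v | [b] ++ v ∈ followerX X (s ++ w)}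
    rw [setOf_append_mem_followerX, ← hw.followerX_append_left hsw, List.append_assoc]

theorem synchronizing_syncPresentation
    (hX : ∀ u ∈ lang X, ∃ w, IntrinsicallySync X w ∧ u ∈ followerX X w) :
    (syncPresentation X).Synchronizing := by
  rintro ⟨S, hS⟩
  obtain ⟨w, hw, rfl⟩ := id hS
  refine ⟨w, eq_singleton_iff_unique_mem.2 ⟨?_, ?_⟩⟩
  · obtain ⟨s, hs, hsw⟩ := hX w hw.1
    refine ⟨⟨_, s, hs, rfl⟩, trivial, walk_syncPresentation_iff.2 ?_⟩
    rw [setOf_append_mem_followerX, hw.followerX_append_left hsw]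
  · rintro ⟨R, hR⟩ ⟨⟨T, t, ht, rfl⟩, -, hTR⟩
    rw [walk_syncPresentation_iff, setOf_append_mem_followerX] at hTR
    subst hTR
    refine Subtype.ext (hw.followerX_append_left ?_)
    simpa [followerX] using nil_mem_of_mem_syncFollowers hR

theorem lang_shift_syncPresentation
    (hX : ∀ u ∈ lang X, ∃ w, IntrinsicallySync X w ∧ u ∈ followerX X w) :
    lang (syncPresentation X).shift = lang X := by
  ext u
  rw [(essential_syncPresentation hX).mem_lang_shift_iff]
  constructor
  · rintro ⟨⟨S, w, _, rfl⟩, T, hST⟩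
    rw [walk_syncPresentation_iff] at hST
    have hwu : w ++ u ∈ lang X := by simpa [hST, followerX] using nil_mem_of_mem_syncFollowers T.2
    exact mem_lang_of_isInfix (List.suffix_append _ _).isInfix hwu
  · intro hu
    obtain ⟨s, hs, hsu⟩ := hX u hu
    have hS : followerX X s ∈ syncFollowers X := ⟨s, hs, rfl⟩
    exact ⟨⟨_, hS⟩, ⟨_, (setOf_append_mem_mem_syncFollowers_iff hS).2 hsu⟩,
      walk_syncPresentation_iff.2 rfl⟩

theorem exists_synchronizing_presentation {V : Type} [Finite V] (G : LabeledGraph V A)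
    (hX : ∀ u ∈ lang G.shift, ∃ w, IntrinsicallySync G.shift w ∧ u ∈ followerX G.shift w) :
    ∃ (n : ℕ) (H : LabeledGraph (Fin n) A),
      H.Deterministic ∧ H.Essential ∧ H.Synchronizing ∧ H.shift = G.shift := by
  have : Finite (syncFollowers G.shift) :=
    (G.finite_range_followerX.subset (by rintro _ ⟨w, -, rfl⟩; exact ⟨w, rfl⟩)).to_subtype
  let e := (Finite.equivFin (syncFollowers G.shift)).symm
  refine ⟨_, (syncPresentation G.shift).comap e, deterministic_syncPresentation.comap e,
    (essential_syncPresentation hX).comap e, (synchronizing_syncPresentation hX).comap e, ?_⟩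
  rw [shift_comap]
  exact shift_eq_of_lang_eq (lang_shift_syncPresentation hX)

end SyncPresentation

theorem stmt1_general {A : Type} (X : Set (ℤ → A))
    (hsofic : ∃ (n : ℕ) (G : LabeledGraph (Fin n) A), G.shift = X) :
    (∃ (n : ℕ) (H : LabeledGraph (Fin n) A),
        H.Deterministic ∧ H.Essential ∧ H.Synchronizing ∧ H.shift = X) ↔
      ∀ u ∈ lang X, ∃ w, IntrinsicallySync X w ∧ u ∈ followerX X w := by
  refine ⟨?_, fun hX => ?_⟩
  · rintro ⟨n, H, -, hess, hsync, rfl⟩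
    exact fun _ => hess.exists_intrinsicallySync hsync
  · obtain ⟨n, G, rfl⟩ := hsofic
    exact exists_synchronizing_presentation G hX

/-- A sofic shift `X ⊆ Σ^ℤ` has a synchronizing deterministic presentation if
and only if for every word `u ∈ B(X)` there exists an intrinsically
synchronizing word `w` for `X` such that `u ∈ F_X(w)`. -/
theorem stmt1 {A : Type} [Fintype A] (X : Set (ℤ → A))
    (hsofic : ∃ (n : ℕ) (G : LabeledGraph (Fin n) A), G.shift = X) :
    (∃ (n : ℕ) (H : LabeledGraph (Fin n) A),
        H.Deterministic ∧ H.Essential ∧ H.Synchronizing ∧ H.shift = X) ↔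
      ∀ u ∈ lang X, ∃ w, IntrinsicallySync X w ∧ u ∈ followerX X w :=
  stmt1_general X hsofic
end

section
/- Let G be a deterministic labeled graph with vertex set Q over a finite alphabet Σ. Then G is synchronizing if and only if for each initial irreducible component C of G there exist (i) a synchronizing word for the subgraph induced by C, and (ii) a word separating the subgraph induced by C from the subgraph induced by Q ∖ C. -/
namespace LabeledGraph

variable {V A : Type} {G : LabeledGraph V A}

lemma walk_append {p q : V} {w1 w2 : List A} :
    G.Walk p (w1 ++ w2) q ↔ ∃ m, G.Walk p w1 m ∧ G.Walk m w2 q := by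
  induction w1 generalizing p with
  | nil =>
      constructor
      · intro h; exact ⟨p, rfl, h⟩
      · rintro ⟨m, rfl, h⟩; exact h
  | cons a w ih =>
      constructor
      · intro h
        obtain ⟨r, he, hw⟩ := h
        obtain ⟨m, h1, h2⟩ := ih.mp hw
        exact ⟨m, ⟨r, he, h1⟩, h2⟩
      · rintro ⟨m, ⟨r, he, h1⟩, h2⟩
        exact ⟨r, he, ih.mpr ⟨m, h1, h2⟩⟩

lemma walk_unique (hdet : G.Deterministic) {p q q' : V} {w : List A}
    (h1 : G.Walk p w q) (h2 : G.Walk p w q') : q = q' := by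
  induction w generalizing p with
  | nil =>
      have e1 : p = q := h1
      have e2 : p = q' := h2
      exact e1.symm.trans e2
  | cons a w ih =>
      obtain ⟨r, he, hw⟩ := h1
      obtain ⟨r', he', hw'⟩ := h2
      obtain rfl := hdet p a r r' he he'
      exact ih hw hw'

lemma reach_refl (p : V) : G.Reachable p p := ⟨[], rfl⟩

lemma reach_trans {p q r : V} (h1 : G.Reachable p q) (h2 : G.Reachable q r) :
    G.Reachable p r := by
  obtain ⟨w1, h1⟩ := h1; obtain ⟨w2, h2⟩ := h2
  exact ⟨w1 ++ w2, walk_append.mpr ⟨q, h1, h2⟩⟩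

lemma transSet_nil (S : Set V) : G.transSet S [] = S := by
  ext e; constructor
  · rintro ⟨q, hq, h⟩
    have : q = e := h
    exact this ▸ hq
  · intro h; exact ⟨e, h, rfl⟩

lemma transSet_append (S : Set V) (w1 w2 : List A) :
    G.transSet S (w1 ++ w2) = G.transSet (G.transSet S w1) w2 := by
  ext e; constructor
  · rintro ⟨q, hq, h⟩
    obtain ⟨m, h1, h2⟩ := walk_append.mp h
    exact ⟨m, ⟨q, hq, h1⟩, h2⟩
  · rintro ⟨m, ⟨q, hq, h1⟩, h2⟩
    exact ⟨q, hq, walk_append.mpr ⟨m, h1, h2⟩⟩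

lemma transSet_singleton (hdet : G.Deterministic) {p q : V} {w : List A}
    (h : G.Walk p w q) : G.transSet {p} w = {q} := by
  ext e; constructor
  · rintro ⟨x, hx, hw⟩
    have hxp : x = p := hx
    subst hxp
    exact walk_unique hdet hw h
  · intro he
    rw [Set.mem_singleton_iff] at he
    subst he
    exact ⟨p, rfl, h⟩

lemma induce_walk {P : Set V} {x y : P} {w : List A}
    (h : (G.induce P).Walk x w y) : G.Walk x.1 w y.1 := by
  induction w generalizing x with
  | nil =>
      have : x = y := h
      exact congrArg Subtype.val this
  | cons a w ih =>
      obtain ⟨r, he, hw⟩ := h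
      exact ⟨r.1, he, ih hw⟩

lemma walk_lift_initial {C : Set V} (hinit : G.InitialSet C) {c e : V} {w : List A}
    (h : G.Walk c w e) (he : e ∈ C) (hc : c ∈ C) :
    (G.induce C).Walk ⟨c, hc⟩ w ⟨e, he⟩ := by
  induction w generalizing c with
  | nil =>
      have : c = e := h
      exact Subtype.ext this
  | cons a w ih =>
      obtain ⟨m, hedge, hw⟩ := h
      have hm : m ∈ C := hinit e he m ⟨w, hw⟩
      exact ⟨⟨m, hm⟩, hedge, ih hw hm⟩

lemma walk_compl_initial {C : Set V} (hinit : G.InitialSet C) {p e : V} {w : List A}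
    (h : G.Walk p w e) (hp : p ∉ C) :
    ∃ he : e ∉ C, (G.induce Cᶜ).Walk ⟨p, hp⟩ w ⟨e, he⟩ := by
  induction w generalizing p with
  | nil =>
      have hpe : p = e := h
      subst hpe
      exact ⟨hp, rfl⟩
  | cons a w ih =>
      obtain ⟨m, hedge, hw⟩ := h
      have hm : m ∉ C := fun hmC => hp (hinit m hmC p ⟨[a], ⟨m, hedge, rfl⟩⟩)
      obtain ⟨he, hwalk⟩ := ih hw hm
      exact ⟨he, ⟨⟨m, hm⟩, hedge, hwalk⟩⟩

lemma ncard_transSet_le [Fintype V] (hdet : G.Deterministic) (S : Set V) (w : List A) :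
    (G.transSet S w).ncard ≤ S.ncard := by
  classical
  apply Set.ncard_le_ncard_of_injOn
      (fun e => if h : ∃ q, q ∈ S ∧ G.Walk q w e then h.choose else e)
  · intro e he
    have hE : ∃ q, q ∈ S ∧ G.Walk q w e := he
    simp only [dif_pos hE]
    exact hE.choose_spec.1
  · intro e1 h1 e2 h2 hfe
    have hE1 : ∃ q, q ∈ S ∧ G.Walk q w e1 := h1
    have hE2 : ∃ q, q ∈ S ∧ G.Walk q w e2 := h2
    simp only [dif_pos hE1, dif_pos hE2] at hfe
    have w1 := hE1.choose_spec.2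
    have w2 := hE2.choose_spec.2
    rw [hfe] at w1
    exact walk_unique hdet w1 w2

lemma shrink_step [Fintype V] (hdet : G.Deterministic) {C : Set V}
    (hinit : G.InitialSet C)
    (hconn : ∀ (c c' : V) (hc : c ∈ C) (hc' : c' ∈ C),
      ∃ y, (G.induce C).Walk ⟨c, hc⟩ y ⟨c', hc'⟩)
    {wsep : List A}
    (hsep1 : ((G.induce C).transSet Set.univ wsep).Nonempty)
    (hsep2 : (G.induce Cᶜ).transSet Set.univ wsep = ∅)
    {S : Set V} {d p : V} (hdS : d ∈ S) (hdC : d ∈ C) (hpS : p ∈ S) (hpC : p ∉ C) :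
    ∃ v, ((G.transSet S v) ∩ C).Nonempty ∧ (G.transSet S v).ncard < S.ncard := by
  obtain ⟨ds, hds⟩ := hsep1
  obtain ⟨cs, -, hwalk⟩ := hds
  obtain ⟨y, hy⟩ := hconn d cs.1 hdC cs.2
  refine ⟨y ++ wsep, ⟨ds.1, ⟨d, hdS, ?_⟩, ds.2⟩, ?_⟩
  · exact induce_walk (walk_append.mpr ⟨cs, hy, hwalk⟩)
  · have heq : G.transSet S (y ++ wsep) = G.transSet (S \ {p}) (y ++ wsep) := by
      ext e; constructor
      · rintro ⟨q, hqS, hw⟩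
        by_cases hqp : q = p
        · exfalso
          subst hqp
          obtain ⟨m, h1, h2⟩ := walk_append.mp hw
          obtain ⟨hm, -⟩ := walk_compl_initial hinit h1 hpC
          obtain ⟨he, hwalk2⟩ := walk_compl_initial hinit h2 hm
          have : (⟨e, he⟩ : ↥Cᶜ) ∈ (G.induce Cᶜ).transSet Set.univ wsep :=
            ⟨⟨m, hm⟩, Set.mem_univ _, hwalk2⟩
          rw [hsep2] at this
          exact this
        · exact ⟨q, ⟨hqS, hqp⟩, hw⟩
      · rintro ⟨q, hqS, hw⟩
        exact ⟨q, hqS.1, hw⟩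
    calc (G.transSet S (y ++ wsep)).ncard
        = (G.transSet (S \ {p}) (y ++ wsep)).ncard := by rw [heq]
      _ ≤ (S \ {p}).ncard := ncard_transSet_le hdet _ _
      _ < S.ncard := Set.ncard_diff_singleton_lt_of_mem hpS S.toFinite

lemma collapse [Fintype V] (hdet : G.Deterministic) {C : Set V}
    (hinit : G.InitialSet C)
    (hconn : ∀ (c c' : V) (hc : c ∈ C) (hc' : c' ∈ C),
      ∃ y, (G.induce C).Walk ⟨c, hc⟩ y ⟨c', hc'⟩)
    {u : List A} {r : ↥C} (hsync : (G.induce C).transSet Set.univ u = {r})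
    {wsep : List A}
    (hsep1 : ((G.induce C).transSet Set.univ wsep).Nonempty)
    (hsep2 : (G.induce Cᶜ).transSet Set.univ wsep = ∅) :
    ∀ n (S : Set V), S.ncard ≤ n → (S ∩ C).Nonempty →
      ∃ v c, c ∈ C ∧ G.transSet S v = {c} := by
  intro n
  induction n with
  | zero =>
      intro S hcard hne
      exfalso
      have : S = ∅ := by
        rw [← Set.ncard_eq_zero S.toFinite]
        omega
      obtain ⟨x, hx, -⟩ := hne
      rw [this] at hx
      exact hx
  | succ n ih =>
      intro S hcard hne
      obtain ⟨d, hdS, hdC⟩ := hne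
      by_cases hsub : S ⊆ C
      · -- everything is in C : use the sync word of the induced graph
        have hr : r ∈ (G.induce C).transSet Set.univ u := by
          rw [hsync]; rfl
        obtain ⟨c₀, -, hwu⟩ := hr
        obtain ⟨y, hy⟩ := hconn d c₀.1 hdC c₀.2
        have hr1 : r.1 ∈ G.transSet S (y ++ u) :=
          ⟨d, hdS, induce_walk (walk_append.mpr ⟨c₀, hy, hwu⟩)⟩
        have hsub1 : ∀ e ∈ G.transSet S (y ++ u), e ∈ C → e = r.1 := by
          rintro e ⟨q, hqS, hw⟩ heC
          have hlift := walk_lift_initial hinit hw heC (hsub hqS)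
          obtain ⟨m, -, h2⟩ := walk_append.mp hlift
          have : (⟨e, heC⟩ : ↥C) ∈ (G.induce C).transSet Set.univ u :=
            ⟨m, Set.mem_univ _, h2⟩
          rw [hsync, Set.mem_singleton_iff] at this
          exact congrArg Subtype.val this
        by_cases hsub2 : G.transSet S (y ++ u) ⊆ C
        · refine ⟨y ++ u, r.1, r.2, ?_⟩
          ext e; constructor
          · intro he
            exact hsub1 e he (hsub2 he)
          · intro he
            rw [Set.mem_singleton_iff] at he
            subst he
            exact hr1
        · obtain ⟨p, hpS1, hpC1⟩ := Set.not_subset.mp hsub2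
          obtain ⟨v₂, hne2, hlt2⟩ :=
            shrink_step hdet hinit hconn hsep1 hsep2 hr1 r.2 hpS1 hpC1
          have hle1 : (G.transSet S (y ++ u)).ncard ≤ S.ncard :=
            ncard_transSet_le hdet _ _
          have hn : (G.transSet (G.transSet S (y ++ u)) v₂).ncard ≤ n := by omega
          obtain ⟨v₃, c, hcC, heq⟩ := ih _ hn hne2
          refine ⟨(y ++ u) ++ (v₂ ++ v₃), c, hcC, ?_⟩
          rw [transSet_append, transSet_append, heq]
      · obtain ⟨p, hpS, hpC⟩ := Set.not_subset.mp hsub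
        obtain ⟨v, hne', hlt⟩ :=
          shrink_step hdet hinit hconn hsep1 hsep2 hdS hdC hpS hpC
        have hn : (G.transSet S v).ncard ≤ n := by omega
        obtain ⟨v', c, hcC, heq⟩ := ih _ hn hne'
        refine ⟨v ++ v', c, hcC, ?_⟩
        rw [transSet_append, heq]

end LabeledGraph


/-- Let `G` be a deterministic labeled graph with vertex set `Q` over a finite
alphabet. Then `G` is synchronizing if and only if for each initial
irreducible component `C` of `G` there exist (i) a synchronizing word for the
subgraph induced by `C`, and (ii) a word separating the subgraph induced by
`C` from the subgraph induced by `Q ∖ C`. -/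
theorem stmt5 {V A : Type} [Fintype V] [Fintype A] (G : LabeledGraph V A)
    (hdet : G.Deterministic) :
    G.Synchronizing ↔
      ∀ C : Set V, G.IsIrredComponent C → G.InitialSet C →
        (∃ w, (G.induce C).SyncWord w) ∧
        (∃ w, ((G.induce C).transSet Set.univ w).Nonempty ∧
          (G.induce Cᶜ).transSet Set.univ w = ∅) := by
  constructor
  · intro hsync C hcomp hinit
    obtain ⟨p₀, hC⟩ := hcomp
    have hp₀C : p₀ ∈ C := by
      rw [hC]
      exact ⟨LabeledGraph.reach_refl p₀, LabeledGraph.reach_refl p₀⟩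
    obtain ⟨w, hw⟩ := hsync p₀
    have hp₀mem : p₀ ∈ G.transSet Set.univ w := by rw [hw]; rfl
    obtain ⟨q0, -, hq0w⟩ := hp₀mem
    have hq0C : q0 ∈ C := hinit p₀ hp₀C q0 ⟨w, hq0w⟩
    have hlift := LabeledGraph.walk_lift_initial hinit hq0w hp₀C hq0C
    constructor
    · refine ⟨w, ⟨p₀, hp₀C⟩, ?_⟩
      ext e; constructor
      · rintro ⟨x, -, hxw⟩
        have hmem : e.1 ∈ G.transSet Set.univ w :=
          ⟨x.1, Set.mem_univ _, LabeledGraph.induce_walk hxw⟩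
        rw [hw, Set.mem_singleton_iff] at hmem
        exact Subtype.ext hmem
      · intro he
        rw [Set.mem_singleton_iff] at he
        subst he
        exact ⟨⟨q0, hq0C⟩, Set.mem_univ _, hlift⟩
    · refine ⟨w, ⟨⟨p₀, hp₀C⟩, ⟨q0, hq0C⟩, Set.mem_univ _, hlift⟩, ?_⟩
      apply Set.eq_empty_iff_forall_notMem.mpr
      rintro e ⟨x, -, hxw⟩
      have hmem : e.1 ∈ G.transSet Set.univ w :=
        ⟨x.1, Set.mem_univ _, LabeledGraph.induce_walk hxw⟩
      rw [hw, Set.mem_singleton_iff] at hmem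
      exact e.2 (by rw [hmem]; exact hp₀C)
  · intro h q
    classical
    obtain ⟨p₀, hp₀T, hmin⟩ :=
      Finset.exists_min_image (Finset.univ.filter fun x => G.Reachable x q)
        (fun p => (Finset.univ.filter fun x => G.Reachable x p).card)
        ⟨q, by simp [LabeledGraph.reach_refl]⟩
    have hp₀q : G.Reachable p₀ q := (Finset.mem_filter.mp hp₀T).2
    have hkey : ∀ p', G.Reachable p' p₀ → G.Reachable p₀ p' := by
      intro p' hp'
      by_contra hn
      have hss : (Finset.univ.filter fun x => G.Reachable x p') ⊂
          (Finset.univ.filter fun x => G.Reachable x p₀) := by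
        rw [Finset.ssubset_iff_of_subset]
        · refine ⟨p₀, by simp [LabeledGraph.reach_refl], ?_⟩
          simp only [Finset.mem_filter, Finset.mem_univ, true_and]
          exact hn
        · intro x hx
          simp only [Finset.mem_filter, Finset.mem_univ, true_and] at hx ⊢
          exact LabeledGraph.reach_trans hx hp'
      have hlt := Finset.card_lt_card hss
      have hge := hmin p' (by
        simp only [Finset.mem_filter, Finset.mem_univ, true_and]
        exact LabeledGraph.reach_trans hp' hp₀q)
      omega
    set C : Set V := {x | G.Reachable p₀ x ∧ G.Reachable x p₀} with hCdef
    have hcomp : G.IsIrredComponent C := ⟨p₀, rfl⟩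
    have hinit : G.InitialSet C := by
      intro x hx p' hp'x
      obtain ⟨hx1, hx2⟩ : G.Reachable p₀ x ∧ G.Reachable x p₀ := hx
      have h1 : G.Reachable p' p₀ := LabeledGraph.reach_trans hp'x hx2
      exact ⟨hkey p' h1, h1⟩
    obtain ⟨⟨u, r, hsync⟩, ⟨wsep, hsep1, hsep2⟩⟩ := h C hcomp hinit
    have hconn : ∀ (c c' : V) (hc : c ∈ C) (hc' : c' ∈ C),
        ∃ y, (G.induce C).Walk ⟨c, hc⟩ y ⟨c', hc'⟩ := by
      intro c c' hc hc'
      have hA : G.Reachable p₀ c ∧ G.Reachable c p₀ := hc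
      have hB : G.Reachable p₀ c' ∧ G.Reachable c' p₀ := hc'
      obtain ⟨y, hy⟩ := LabeledGraph.reach_trans hA.2 hB.1
      exact ⟨y, LabeledGraph.walk_lift_initial hinit hy hc' hc⟩
    have hp₀C : p₀ ∈ C := ⟨LabeledGraph.reach_refl p₀, LabeledGraph.reach_refl p₀⟩
    obtain ⟨v, c, hcC, hv⟩ :=
      LabeledGraph.collapse hdet hinit hconn hsync hsep1 hsep2
        (Set.univ : Set V).ncard Set.univ le_rfl ⟨p₀, Set.mem_univ _, hp₀C⟩
    obtain ⟨-, hc2⟩ : G.Reachable p₀ c ∧ G.Reachable c p₀ := hcC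
    obtain ⟨x, hx⟩ := LabeledGraph.reach_trans hc2 hp₀q
    exact ⟨v ++ x, by
      rw [LabeledGraph.transSet_append, hv, LabeledGraph.transSet_singleton hdet hx]⟩
end

section
/- Let G and H be deterministic labeled graphs over a finite alphabet Σ, with H follower-separated, and let φ : Q_G → Q_H be a map between their vertex sets. Then φ is a homomorphism if and only if F_G(q) = F_H(φ(q)) for all q ∈ Q_G. -/
/-- A homomorphism between deterministic labeled graphs `G` and `H` is a map
`φ : Q_G → Q_H` preserving follower sets and the transition action:
`F_G(q) = F_H(φ(q))` and `φ(q·w) = φ(q)·w` for all `q` and all `w ∈ F_G(q)`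
(the latter encoded via labeled paths). -/
def IsHom {V W A : Type} (G : LabeledGraph V A) (H : LabeledGraph W A)
    (φ : V → W) : Prop :=
  (∀ q, G.follower q = H.follower (φ q)) ∧
    ∀ q w q', G.Walk q w q' → H.Walk (φ q) w (φ q')

namespace LabeledGraph

theorem walk_append_s9 {V A : Type} (G : LabeledGraph V A) :
    ∀ (u v : List A) (p q : V), G.Walk p (u ++ v) q ↔ ∃ r, G.Walk p u r ∧ G.Walk r v q := by
  intro u
  induction u with
  | nil =>
      intro v p q
      constructor
      · intro h; exact ⟨p, rfl, h⟩
      · rintro ⟨r, rfl, h⟩; exact h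
  | cons a u ih =>
      intro v p q
      simp only [List.cons_append, Walk]
      constructor
      · rintro ⟨r, he, hw⟩
        obtain ⟨s, h1, h2⟩ := (ih v r q).1 hw
        exact ⟨s, ⟨r, he, h1⟩, h2⟩
      · rintro ⟨s, ⟨r, he, h1⟩, h2⟩
        exact ⟨r, he, (ih v r q).2 ⟨s, h1, h2⟩⟩

theorem walk_det {V A : Type} {G : LabeledGraph V A} (hd : G.Deterministic) :
    ∀ (w : List A) (p q q' : V), G.Walk p w q → G.Walk p w q' → q = q' := by
  intro w
  induction w with
  | nil => intro p q q' h1 h2; exact h1 ▸ h2 ▸ rfl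
  | cons a w ih =>
      rintro p q q' ⟨r, he, hw⟩ ⟨r', he', hw'⟩
      obtain rfl := hd p a r r' he he'
      exact ih r q q' hw hw'

end LabeledGraph

/-- Let `G` and `H` be deterministic labeled graphs over a finite alphabet,
with `H` follower-separated, and let `φ : Q_G → Q_H`. Then `φ` is a
homomorphism if and only if `F_G(q) = F_H(φ(q))` for all `q ∈ Q_G`. -/
theorem stmt9 {V W A : Type} [Fintype V] [Fintype W] [Fintype A]
    (G : LabeledGraph V A) (H : LabeledGraph W A)
    (hdG : G.Deterministic) (hdH : H.Deterministic)
    (hfs : H.FollowerSeparated) (φ : V → W) :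
    IsHom G H φ ↔ ∀ q, G.follower q = H.follower (φ q) := by
  constructor
  · exact fun h => h.1
  · intro hfol
    refine ⟨hfol, ?_⟩
    intro q w q' hw
    have hwF : w ∈ G.follower q := ⟨q', hw⟩
    rw [hfol q] at hwF
    obtain ⟨r, hr⟩ := hwF
    -- show φ q' = r
    suffices h : φ q' = r by rw [h]; exact hr
    apply hfs
    rw [← hfol q']
    ext v
    constructor
    · rintro ⟨s, hs⟩
      have : w ++ v ∈ G.follower q := ⟨s, (G.walk_append_s9 w v q s).2 ⟨q', hw, hs⟩⟩
      rw [hfol q] at this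
      obtain ⟨t, ht⟩ := this
      obtain ⟨m, hm1, hm2⟩ := (H.walk_append_s9 w v (φ q) t).1 ht
      obtain rfl := LabeledGraph.walk_det hdH w (φ q) r m hr hm1
      exact ⟨t, hm2⟩
    · rintro ⟨s, hs⟩
      have : w ++ v ∈ H.follower (φ q) := ⟨s, (H.walk_append_s9 w v (φ q) s).2 ⟨r, hr, hs⟩⟩
      rw [← hfol q] at this
      obtain ⟨t, ht⟩ := this
      obtain ⟨m, hm1, hm2⟩ := (G.walk_append_s9 w v q t).1 ht
      obtain rfl := LabeledGraph.walk_det hdG w q q' m hw hm1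
      exact ⟨t, hm2⟩
end
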